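/- arXiv:2211.00188 — 2 statements merged into one kernel-verified Lean document; each statement's English description precedes it below -/
import Mathlib

section
/- Under the hypotheses of the bidirectional nonconvex setting — f = (1/n)∑ f_i with f L₋-smooth, L₊-average-smoothness, x^{t+1} = x^t − γg^t, g̃^t = (1/n)∑_i g̃_i^t, worker recursion P^{t+1} ≤ (1 − A^W)P^t + B^W L₊² R^t, master recursion ‖g^{t+1} − g̃^{t+1}‖² ≤ (1 − A^M)‖g^t − g̃^t‖² + 3B^M(2 − A^W)P^t + 3B^M(B^W+1)L₊² R^t (with P^t := (1/n)∑_i ‖g̃_i^t − ∇f_i(x^t)‖², R^t := ‖x^{t+1} − x^t‖²) — and with stepsize 0 < γ ≤ 1/(L₋ + L₊·√(6B^M(B^W+1)/A^M + (2B^W/A^W)(1 + 3B^M(2−A^W)/A^M))), the Lyapunov function Ψ^t := f(x^t) − f^inf + (γ/A^M)‖g^t − g̃^t‖² + (γ/A^W)(1 + 3B^M(2 − A^W)/A^M)·P^t satisfies, for every t ≥ 0, Ψ^{t+1} ≤ Ψ^t − (γ/2)‖∇f(x^t)‖². -/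
open InnerProductSpace

private lemma aux_descent_lemma {F : Type*} [NormedAddCommGroup F] [InnerProductSpace ℝ F]
    [CompleteSpace F] (f : F → ℝ) (hf : Differentiable ℝ f) (L : ℝ)
    (hL : ∀ x y, ‖gradient f x - gradient f y‖ ≤ L * ‖x - y‖) (x y : F) :
    f y ≤ f x + inner ℝ (gradient f x) (y - x) + L / 2 * ‖y - x‖ ^ 2 := by
  set v := y - x with hv
  have hder : ∀ s : ℝ, HasDerivAt (fun s : ℝ => f (x + s • v))
      (inner ℝ (gradient f (x + s • v)) v : ℝ) s := by
    intro s
    have h1 : HasDerivAt (fun s : ℝ => x + s • v) v s := by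
      simpa using ((hasDerivAt_id s).smul_const v).const_add x
    have h2 := hasGradientAt_iff_hasFDerivAt.1 (hf (x + s • v)).hasGradientAt
    have h3 := h2.comp_hasDerivAt s h1
    rw [toDual_apply_apply] at h3
    exact h3
  set φ : ℝ → ℝ := fun s => f (x + s • v) - s * (inner ℝ (gradient f x) v : ℝ)
      - s ^ 2 * (L / 2 * ‖v‖ ^ 2) with hφ
  have hφd : ∀ s : ℝ, HasDerivAt φ
      ((inner ℝ (gradient f (x + s • v)) v : ℝ) - (inner ℝ (gradient f x) v : ℝ)
        - 2 * s * (L / 2 * ‖v‖ ^ 2)) s := by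
    intro s
    have ha := (hder s).sub ((hasDerivAt_id s).mul_const (inner ℝ (gradient f x) v : ℝ))
    have hb := (hasDerivAt_pow 2 s).mul_const (L / 2 * ‖v‖ ^ 2)
    have hc := ha.sub hb
    refine hc.congr_deriv ?_
    push_cast
    ring
  have hanti : AntitoneOn φ (Set.Icc (0:ℝ) 1) := by
    apply antitoneOn_of_deriv_nonpos (convex_Icc 0 1)
    · exact (Differentiable.continuous (fun s => (hφd s).differentiableAt)).continuousOn
    · exact fun s _ => (hφd s).differentiableAt.differentiableWithinAt
    · intro s hs
      rw [interior_Icc] at hs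
      rw [(hφd s).deriv]
      have h1 : (inner ℝ (gradient f (x + s • v) - gradient f x) v : ℝ)
          ≤ ‖gradient f (x + s • v) - gradient f x‖ * ‖v‖ := real_inner_le_norm _ _
      have h2 : ‖gradient f (x + s • v) - gradient f x‖ ≤ L * (s * ‖v‖) := by
        have h := hL (x + s • v) x
        rw [add_sub_cancel_left, norm_smul, Real.norm_eq_abs, abs_of_nonneg hs.1.le] at h
        linarith
      have h3 : (inner ℝ (gradient f (x + s • v)) v : ℝ) - (inner ℝ (gradient f x) v : ℝ)
          = (inner ℝ (gradient f (x + s • v) - gradient f x) v : ℝ) := by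
        rw [inner_sub_left]
      rw [h3]
      nlinarith [mul_le_mul_of_nonneg_right h2 (norm_nonneg v)]
  have h01 := hanti (Set.left_mem_Icc.2 zero_le_one) (Set.right_mem_Icc.2 zero_le_one) zero_le_one
  have hxy : x + v = y := by rw [hv]; abel
  have h0 : φ 0 = f x := by simp [hφ]
  have h1 : φ 1 = f y - (inner ℝ (gradient f x) v : ℝ) - L / 2 * ‖v‖ ^ 2 := by
    simp [hφ, hxy]
  rw [h0, h1] at h01
  linarith

private lemma aux_gradient_avg {F : Type*} [NormedAddCommGroup F] [InnerProductSpace ℝ F]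
    [CompleteSpace F] {n : ℕ} (fi : Fin n → F → ℝ) (hdiff : ∀ i, Differentiable ℝ (fi i))
    (f : F → ℝ) (hf : ∀ x, f x = (1 / (n : ℝ)) * ∑ i, fi i x) (x : F) :
    gradient f x = (1 / (n : ℝ)) • ∑ i, gradient (fi i) x := by
  have hs : HasFDerivAt (fun x => ∑ i, fi i x)
      (∑ i, toDual ℝ F (gradient (fi i) x)) x :=
    HasFDerivAt.fun_sum fun i _ => hasGradientAt_iff_hasFDerivAt.1 ((hdiff i x).hasGradientAt)
  have h1 : HasFDerivAt (fun x => (1 / (n:ℝ)) * ∑ i, fi i x)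
      ((1 / (n:ℝ)) • ∑ i, toDual ℝ F (gradient (fi i) x)) x := hs.const_mul _
  have h2 : HasGradientAt f ((1 / (n:ℝ)) • ∑ i, gradient (fi i) x) x := by
    rw [hasGradientAt_iff_hasFDerivAt, map_smul, map_sum]
    exact h1.congr_of_eventuallyEq (Filter.Eventually.of_forall fun y => hf y)
  exact h2.gradient

private lemma aux_sq_triangle (a b c : ℝ) (ha : 0 ≤ a) (h : a ≤ b + c) :
    a ^ 2 ≤ 2 * b ^ 2 + 2 * c ^ 2 := by
  nlinarith [sq_nonneg (b - c), sq_nonneg (b + c)]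

private lemma aux_norm_avg_sq_le {F : Type*} [NormedAddCommGroup F] [NormedSpace ℝ F] {n : ℕ}
    (hn : 1 ≤ n) (v : Fin n → F) :
    ‖(1 / (n : ℝ)) • ∑ i, v i‖ ^ 2 ≤ (1 / (n : ℝ)) * ∑ i, ‖v i‖ ^ 2 := by
  have hn0 : (0:ℝ) < n := by exact_mod_cast hn
  have h1 : ‖(1 / (n : ℝ)) • ∑ i, v i‖ = (1 / (n:ℝ)) * ‖∑ i, v i‖ := by
    rw [norm_smul, Real.norm_eq_abs, abs_of_nonneg (by positivity)]
  have h2 : ‖∑ i, v i‖ ≤ ∑ i, ‖v i‖ := norm_sum_le _ _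
  have h3 : (∑ i, ‖v i‖) ^ 2 ≤ (n:ℝ) * ∑ i, ‖v i‖ ^ 2 := by
    have := sq_sum_le_card_mul_sum_sq (s := (Finset.univ : Finset (Fin n)))
      (f := fun i => ‖v i‖)
    simpa using this
  have h4 : ‖∑ i, v i‖ ^ 2 ≤ (n:ℝ) * ∑ i, ‖v i‖ ^ 2 :=
    le_trans (pow_le_pow_left₀ (norm_nonneg _) h2 2) h3
  rw [h1, mul_pow]
  calc (1/(n:ℝ))^2 * ‖∑ i, v i‖^2 ≤ (1/(n:ℝ))^2 * ((n:ℝ) * ∑ i, ‖v i‖^2) :=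
        mul_le_mul_of_nonneg_left h4 (by positivity)
    _ = (1/(n:ℝ)) * ∑ i, ‖v i‖^2 := by field_simp

private lemma aux_endgame (γ AM AW BM BW Lp Lm Dq : ℝ)
    (hAM0 : 0 < AM) (hAW0 : 0 < AW) (hγ0 : 0 < γ)
    (hC0 : (0:ℝ) ≤ 1 + 3 * BM * (2 - AW) / AM)
    (hDq : Dq = 6 * BM * (BW + 1) / AM + (2 * BW / AW) * (1 + 3 * BM * (2 - AW) / AM))
    (hstep : Lm * γ + γ ^ 2 * Lp ^ 2 * Dq ≤ 1)
    (q1 q2 q3 q4 q5 q6 qip qf qf' qP qP' : ℝ)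
    (hq20 : 0 ≤ q2)
    (hdesc : qf' ≤ qf - γ * qip + Lm / 2 * (γ ^ 2 * q2))
    (hdfg : q6 = q1 - 2 * qip + q2)
    (hjen : q5 ≤ qP)
    (htri : q6 ≤ 2 * q3 + 2 * q5)
    (hM : q4 ≤ (1 - AM) * q3 + 3 * BM * (2 - AW) * qP + 3 * BM * (BW + 1) * Lp ^ 2 * (γ ^ 2 * q2))
    (hW : qP' ≤ (1 - AW) * qP + BW * Lp ^ 2 * (γ ^ 2 * q2)) :
    qf' + (γ / AM) * q4 + (γ / AW) * (1 + 3 * BM * (2 - AW) / AM) * qP'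
      ≤ qf + (γ / AM) * q3 + (γ / AW) * (1 + 3 * BM * (2 - AW) / AM) * qP - (γ / 2) * q1 := by
  have hAMne : AM ≠ 0 := ne_of_gt hAM0
  have hAWne : AW ≠ 0 := ne_of_gt hAW0
  have hdfg' : γ * qip = (γ / 2) * q1 + (γ / 2) * q2 - (γ / 2) * q6 := by
    linear_combination (γ / 2) * hdfg
  have htri' : (γ / 2) * q6 ≤ (γ / 2) * (2 * q3 + 2 * q5) :=
    mul_le_mul_of_nonneg_left htri (by positivity)
  have hjen' : γ * q5 ≤ γ * qP := mul_le_mul_of_nonneg_left hjen hγ0.le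
  have hM' : (γ / AM) * q4 ≤ (γ / AM) * ((1 - AM) * q3 + 3 * BM * (2 - AW) * qP
      + 3 * BM * (BW + 1) * Lp ^ 2 * (γ ^ 2 * q2)) :=
    mul_le_mul_of_nonneg_left hM (by positivity)
  have hW' : (γ / AW) * (1 + 3 * BM * (2 - AW) / AM) * qP'
      ≤ (γ / AW) * (1 + 3 * BM * (2 - AW) / AM) * ((1 - AW) * qP
        + BW * Lp ^ 2 * (γ ^ 2 * q2)) :=
    mul_le_mul_of_nonneg_left hW (mul_nonneg (by positivity) hC0)
  have eG : (γ / AM) * ((1 - AM) * q3) = (γ / AM) * q3 - γ * q3 := by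
    field_simp
  have eP : (γ / AM) * (3 * BM * (2 - AW) * qP)
      + (γ / AW) * (1 + 3 * BM * (2 - AW) / AM) * ((1 - AW) * qP) + γ * qP
      = (γ / AW) * (1 + 3 * BM * (2 - AW) / AM) * qP := by
    field_simp
    ring
  have eN : (γ / AM) * (3 * BM * (BW + 1) * Lp ^ 2 * (γ ^ 2 * q2))
      + (γ / AW) * (1 + 3 * BM * (2 - AW) / AM) * (BW * Lp ^ 2 * (γ ^ 2 * q2))
      = (γ / 2) * (γ ^ 2 * Lp ^ 2 * Dq) * q2 := by
    rw [hDq]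
    field_simp
    ring
  have hng : (γ / 2) * (γ ^ 2 * Lp ^ 2 * Dq) * q2 + Lm / 2 * (γ ^ 2 * q2)
      - (γ / 2) * q2 ≤ 0 := by
    have h1 : (γ / 2) * (γ ^ 2 * Lp ^ 2 * Dq) * q2 + Lm / 2 * (γ ^ 2 * q2)
        - (γ / 2) * q2 = (γ / 2) * q2 * (γ ^ 2 * Lp ^ 2 * Dq + Lm * γ - 1) := by ring
    rw [h1]
    apply mul_nonpos_of_nonneg_of_nonpos (by positivity) (by linarith)
  linarith [hdesc, hdfg', htri', hjen', hM', hW', eG, eP, eN, hng]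

/-- **Lemma (one-step Lyapunov decrease, bidirectional case).**
Under the hypotheses of the bidirectional nonconvex setting and with the
admissible stepsize, the Lyapunov function
`Ψ t = f(x^t) - f^inf + (γ/AM)‖g^t - g̃^t‖² + (γ/AW)(1 + 3BM(2 - AW)/AM)·P^t`
satisfies `Ψ (t+1) ≤ Ψ t - (γ/2)‖∇f(x^t)‖²` for every `t`. -/
theorem bidirectional_lyapunov_decrease
    {d n : ℕ} (hn : 1 ≤ n)
    (fi : Fin n → EuclideanSpace ℝ (Fin d) → ℝ)
    (hdiff : ∀ i, Differentiable ℝ (fi i))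
    (f : EuclideanSpace ℝ (Fin d) → ℝ)
    (hf : ∀ x, f x = (1 / (n : ℝ)) * ∑ i, fi i x)
    (Lm Lp : ℝ) (hLppos : 0 < Lp)
    (hLm : ∀ x y, ‖gradient f x - gradient f y‖ ≤ Lm * ‖x - y‖)
    (finf : ℝ) (hfinf : ∀ x, finf ≤ f x)
    (hLp : ∀ x y, (1 / (n : ℝ)) * ∑ i, ‖gradient (fi i) x - gradient (fi i) y‖ ^ 2
      ≤ Lp ^ 2 * ‖x - y‖ ^ 2)
    (AW AM BW BM : ℝ)
    (hAW : AW ∈ Set.Ioc (0 : ℝ) 1) (hAM : AM ∈ Set.Ioc (0 : ℝ) 1)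
    (hBW : 0 ≤ BW) (hBM : 0 ≤ BM)
    (γ : ℝ) (hγ0 : 0 < γ)
    (hγ : γ ≤ 1 / (Lm + Lp * Real.sqrt (6 * BM * (BW + 1) / AM
      + (2 * BW / AW) * (1 + 3 * BM * (2 - AW) / AM))))
    (x g gt : ℕ → EuclideanSpace ℝ (Fin d))
    (gti : ℕ → Fin n → EuclideanSpace ℝ (Fin d))
    (hx : ∀ t, x (t + 1) = x t - γ • g t)
    (hgt : ∀ t, gt t = (1 / (n : ℝ)) • ∑ i, gti t i)
    (P R : ℕ → ℝ)
    (hP : ∀ t, P t = (1 / (n : ℝ)) * ∑ i, ‖gti t i - gradient (fi i) (x t)‖ ^ 2)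
    (hR : ∀ t, R t = ‖x (t + 1) - x t‖ ^ 2)
    (hPrec : ∀ t, P (t + 1) ≤ (1 - AW) * P t + BW * Lp ^ 2 * R t)
    (hMrec : ∀ t, ‖g (t + 1) - gt (t + 1)‖ ^ 2 ≤
      (1 - AM) * ‖g t - gt t‖ ^ 2 + 3 * BM * (2 - AW) * P t
        + 3 * BM * (BW + 1) * Lp ^ 2 * R t)
    (Ψ : ℕ → ℝ)
    (hΨ : ∀ t, Ψ t = f (x t) - finf + (γ / AM) * ‖g t - gt t‖ ^ 2
      + (γ / AW) * (1 + 3 * BM * (2 - AW) / AM) * P t) :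
    ∀ t, Ψ (t + 1) ≤ Ψ t - (γ / 2) * ‖gradient f (x t)‖ ^ 2 := by
  intro t
  obtain ⟨hAW0, hAW1⟩ := hAW
  obtain ⟨hAM0, hAM1⟩ := hAM
  have hAMne : AM ≠ 0 := ne_of_gt hAM0
  have hAWne : AW ≠ 0 := ne_of_gt hAW0
  rcases Nat.eq_zero_or_pos d with hd | hd
  · subst hd
    have hz : ∀ v : EuclideanSpace ℝ (Fin 0), ‖v‖ = 0 := fun v => by
      rw [Subsingleton.elim v 0, norm_zero]
    have hx1 : x (t+1) = x t := Subsingleton.elim _ _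
    rw [hΨ, hΨ, hP, hP, hx1]
    simp [hz]
  · -- main case : d ≥ 1
    have hLm0 : 0 ≤ Lm := by
      have h := hLm (EuclideanSpace.single (⟨0, hd⟩ : Fin d) (1:ℝ)) 0
      have hnorm : ‖EuclideanSpace.single (⟨0, hd⟩ : Fin d) (1:ℝ) - 0‖ = 1 := by
        simp [EuclideanSpace.norm_single]
      have := le_trans (norm_nonneg _) h
      rwa [hnorm, mul_one] at this
    set Dq : ℝ := 6 * BM * (BW + 1) / AM + (2 * BW / AW) * (1 + 3 * BM * (2 - AW) / AM)
      with hDq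
    have hC0 : (0:ℝ) ≤ 1 + 3 * BM * (2 - AW) / AM := by
      have : (0:ℝ) ≤ 3 * BM * (2 - AW) / AM := div_nonneg (by nlinarith) hAM0.le
      linarith
    have hD0 : 0 ≤ Dq := by
      have h1 : (0:ℝ) ≤ 6 * BM * (BW + 1) / AM := div_nonneg (by nlinarith) hAM0.le
      have h2 : (0:ℝ) ≤ (2 * BW / AW) * (1 + 3 * BM * (2 - AW) / AM) :=
        mul_nonneg (div_nonneg (by linarith) hAW0.le) hC0
      rw [hDq]; linarith
    set S : ℝ := Real.sqrt Dq with hS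
    have hS0 : 0 ≤ S := Real.sqrt_nonneg _
    have hSq : S ^ 2 = Dq := Real.sq_sqrt hD0
    have hden : 0 < Lm + Lp * S := by
      by_contra hc
      push_neg at hc
      have h1 : 1 / (Lm + Lp * S) ≤ 0 := one_div_nonpos.2 hc
      rw [hS, hDq] at h1
      linarith [hγ]
    have hγ1 : γ * (Lm + Lp * S) ≤ 1 := by
      rw [← le_div_iff₀ hden]
      rw [hS, hDq]
      exact hγ
    have hstep : Lm * γ + γ^2 * Lp^2 * Dq ≤ 1 := by
      have hb0 : 0 ≤ γ * (Lp * S) := by positivity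
      have hb1 : γ * (Lp * S) ≤ 1 := by nlinarith
      have hb2 : (γ * (Lp * S))^2 ≤ γ * (Lp * S) := by nlinarith
      have hkey : γ^2 * Lp^2 * Dq = (γ * (Lp * S))^2 := by rw [← hSq]; ring
      nlinarith
    -- gradient of the average
    have hgradavg : ∀ z, gradient f z = (1/(n:ℝ)) • ∑ i, gradient (fi i) z :=
      fun z => aux_gradient_avg fi hdiff f hf z
    have hfdiff : Differentiable ℝ f := by
      have hfe : f = fun z => (1/(n:ℝ)) * ∑ i, fi i z := funext hf
      rw [hfe]
      exact Differentiable.const_mul (Differentiable.fun_sum fun i _ => hdiff i) _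
    -- descent lemma applied
    have hxd : x (t+1) - x t = -(γ • g t) := by rw [hx t]; abel
    have hRt : R t = γ^2 * ‖g t‖^2 := by
      rw [hR t, hxd, norm_neg, norm_smul, Real.norm_eq_abs, mul_pow, sq_abs]
    have hn2 : ‖x (t+1) - x t‖^2 = γ^2 * ‖g t‖^2 := by
      rw [hxd, norm_neg, norm_smul, Real.norm_eq_abs, mul_pow, sq_abs]
    have hip : (inner ℝ (gradient f (x t)) (x (t+1) - x t) : ℝ)
        = -(γ * (inner ℝ (gradient f (x t)) (g t) : ℝ)) := by
      rw [hxd, inner_neg_right, real_inner_smul_right]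
    have hdesc : f (x (t+1)) ≤ f (x t) - γ * (inner ℝ (gradient f (x t)) (g t) : ℝ)
        + Lm/2 * (γ^2 * ‖g t‖^2) := by
      have h := aux_descent_lemma f hfdiff Lm hLm (x t) (x (t+1))
      rw [hip, hn2] at h
      linarith
    -- inner product expansion
    have hdfg : ‖gradient f (x t) - g t‖^2 = ‖gradient f (x t)‖^2
        - 2 * (inner ℝ (gradient f (x t)) (g t) : ℝ) + ‖g t‖^2 := norm_sub_sq_real _ _
    have hdfg' : γ * (inner ℝ (gradient f (x t)) (g t) : ℝ)
        = (γ/2) * ‖gradient f (x t)‖^2 + (γ/2) * ‖g t‖^2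
          - (γ/2) * ‖gradient f (x t) - g t‖^2 := by
      linear_combination (γ / 2) * hdfg
    -- Jensen
    have hjen : ‖gt t - gradient f (x t)‖^2 ≤ P t := by
      rw [hP t]
      have he : gt t - gradient f (x t)
          = (1/(n:ℝ)) • ∑ i, (gti t i - gradient (fi i) (x t)) := by
        rw [hgt t, hgradavg (x t), ← smul_sub, Finset.sum_sub_distrib]
      rw [he]
      exact aux_norm_avg_sq_le hn _
    -- triangle
    have htri : ‖gradient f (x t) - g t‖^2
        ≤ 2 * ‖g t - gt t‖^2 + 2 * ‖gt t - gradient f (x t)‖^2 := by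
      have h : ‖gradient f (x t) - g t‖ ≤ ‖g t - gt t‖ + ‖gt t - gradient f (x t)‖ := by
        have he : gradient f (x t) - g t
            = -((g t - gt t) + (gt t - gradient f (x t))) := by abel
        rw [he, norm_neg]
        exact norm_add_le _ _
      exact aux_sq_triangle _ _ _ (norm_nonneg _) h
    rw [hΨ (t+1), hΨ t]
    have hMq : ‖g (t+1) - gt (t+1)‖^2 ≤ (1 - AM) * ‖g t - gt t‖^2
        + 3 * BM * (2 - AW) * P t + 3 * BM * (BW + 1) * Lp ^ 2 * (γ ^ 2 * ‖g t‖^2) := by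
      have h := hMrec t
      rw [hRt] at h
      linarith
    have hWq : P (t+1) ≤ (1 - AW) * P t + BW * Lp ^ 2 * (γ ^ 2 * ‖g t‖^2) := by
      have h := hPrec t
      rw [hRt] at h
      linarith only [h]
    have hq20 : (0:ℝ) ≤ ‖g t‖^2 := by positivity
    have hfin := aux_endgame γ AM AW BM BW Lp Lm Dq hAM0 hAW0 hγ0 hC0 hDq hstep
      (‖gradient f (x t)‖^2) (‖g t‖^2) (‖g t - gt t‖^2) (‖g (t+1) - gt (t+1)‖^2)
      (‖gt t - gradient f (x t)‖^2) (‖gradient f (x t) - g t‖^2)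
      (inner ℝ (gradient f (x t)) (g t) : ℝ) (f (x t)) (f (x (t+1))) (P t) (P (t+1))
      hq20 hdesc hdfg hjen htri hMq hWq
    linarith only [hfin]
end

section
/- Let f_1,…,f_n : ℝ^d → ℝ be differentiable, f = (1/n)∑ f_i be L₋-smooth and bounded below by f^inf ∈ ℝ, and assume L₊-average-smoothness. Let A ∈ (0,1], B ≥ 0, set γ := 1/(L₋ + L₊√(B/A)), let x^{t+1} = x^t − γ·(1/n)∑_i g_i^t and G^t := (1/n)∑_i ‖∇f_i(x^t) − g_i^t‖², and assume G^{t+1} ≤ (1 − A)G^t + B L₊²‖x^{t+1} − x^t‖² for all t ≥ 0. Then for every T ≥ 1, min_{0 ≤ t < T} ‖∇f(x^t)‖² ≤ 2(f(x⁰) − f^inf)·(L₋ + L₊√(B/A))/T + G⁰/(A·T). -/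
open scoped InnerProductSpace

section aux
variable {E : Type*} [NormedAddCommGroup E] [InnerProductSpace ℝ E] [CompleteSpace E]

lemma descent_lemma (f : E → ℝ) (hf : Differentiable ℝ f) (L : ℝ) (hL : 0 ≤ L)
    (hlip : ∀ x y, ‖gradient f x - gradient f y‖ ≤ L * ‖x - y‖) (x y : E) :
    f y ≤ f x + ⟪gradient f x, y - x⟫_ℝ + L / 2 * ‖y - x‖ ^ 2 := by
  set v := y - x with hv
  have hgrad : ∀ p, (fderiv ℝ f p : E → ℝ) = fun w => ⟪gradient f p, w⟫_ℝ := by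
    intro p
    have h1 : HasFDerivAt f (InnerProductSpace.toDual ℝ E (gradient f p)) p :=
      (hf p).hasGradientAt
    funext w
    rw [h1.fderiv]
    exact InnerProductSpace.toDual_apply_apply
  have hφ : ∀ t : ℝ, HasDerivAt (fun t : ℝ => f (x + t • v))
      (⟪gradient f (x + t • v), v⟫_ℝ) t := by
    intro t
    have hc : HasDerivAt (fun t : ℝ => x + t • v) v t := by
      simpa using ((hasDerivAt_id t).smul_const v).const_add x
    have := (hf (x + t • v)).hasFDerivAt.comp_hasDerivAt t hc
    have h2 : (fderiv ℝ f (x + t • v)) v = ⟪gradient f (x + t • v), v⟫_ℝ := by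
      rw [hgrad]
    rwa [h2] at this
  have hcontg : Continuous (fun p : E => gradient f p) := by
    have : LipschitzWith L.toNNReal (fun p : E => gradient f p) := by
      apply LipschitzWith.of_dist_le_mul
      intro a b
      rw [dist_eq_norm, dist_eq_norm, Real.coe_toNNReal L hL]
      exact hlip a b
    exact this.continuous
  have hcont : Continuous fun t : ℝ => ⟪gradient f (x + t • v), v⟫_ℝ :=
    (hcontg.comp (continuous_const.add (continuous_id.smul continuous_const))).inner continuous_const
  have key : f y - f x = ∫ t in (0:ℝ)..1, ⟪gradient f (x + t • v), v⟫_ℝ := by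
    have := intervalIntegral.integral_eq_sub_of_hasDerivAt
      (f := fun t : ℝ => f (x + t • v))
      (f' := fun t : ℝ => ⟪gradient f (x + t • v), v⟫_ℝ)
      (a := 0) (b := 1) (fun t _ => hφ t) (hcont.intervalIntegrable 0 1)
    simpa [hv] using this.symm
  have hbound : ∫ t in (0:ℝ)..1, ⟪gradient f (x + t • v), v⟫_ℝ
      ≤ ⟪gradient f x, v⟫_ℝ + L / 2 * ‖v‖ ^ 2 := by
    have hmono : ∫ t in (0:ℝ)..1, ⟪gradient f (x + t • v), v⟫_ℝ
        ≤ ∫ t in (0:ℝ)..1, (⟪gradient f x, v⟫_ℝ + L * ‖v‖ ^ 2 * t) := by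
      apply intervalIntegral.integral_mono_on (by norm_num)
        (hcont.intervalIntegrable 0 1)
        (((continuous_const.add (continuous_const.mul continuous_id)).intervalIntegrable 0 1))
      intro t ht
      have h1 : ⟪gradient f (x + t • v), v⟫_ℝ - ⟪gradient f x, v⟫_ℝ
          = ⟪gradient f (x + t • v) - gradient f x, v⟫_ℝ := by
        rw [inner_sub_left]
      have h2 : ⟪gradient f (x + t • v) - gradient f x, v⟫_ℝ
          ≤ ‖gradient f (x + t • v) - gradient f x‖ * ‖v‖ := real_inner_le_norm _ _
      have h3 : ‖gradient f (x + t • v) - gradient f x‖ ≤ L * (t * ‖v‖) := by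
        have := hlip (x + t • v) x
        simpa [norm_smul, abs_of_nonneg ht.1] using this
      simp only [Pi.add_apply, Pi.mul_apply, id_eq]
      nlinarith [norm_nonneg v, ht.1]
    have hval : ∫ t in (0:ℝ)..1, (⟪gradient f x, v⟫_ℝ + L * ‖v‖ ^ 2 * t)
        = ⟪gradient f x, v⟫_ℝ + L / 2 * ‖v‖ ^ 2 := by
      rw [intervalIntegral.integral_add intervalIntegrable_const
        ((by fun_prop : Continuous fun t : ℝ => L * ‖v‖ ^ 2 * t).intervalIntegrable 0 1),
        intervalIntegral.integral_const_mul, integral_id]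
      simp
      ring
    linarith [hmono, hval.le, hval.ge]
  linarith [key, hbound]


lemma grad_zero_of_flat (f : E → ℝ) (hf : Differentiable ℝ f)
    (hlip : ∀ x y, ‖gradient f x - gradient f y‖ ≤ 0 * ‖x - y‖)
    (finf : ℝ) (hfinf : ∀ x, finf ≤ f x) (p : E) : gradient f p = 0 := by
  by_contra hc
  have hcpos : 0 < ‖gradient f p‖ ^ 2 := by
    have := norm_pos_iff.mpr hc
    positivity
  set cvec := gradient f p with hcv
  set t0 := (f p - finf + 1) / ‖cvec‖ ^ 2 with ht0
  have hlin := descent_lemma f hf 0 le_rfl hlip p (p - t0 • cvec)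
  have hip : ⟪cvec, (p - t0 • cvec) - p⟫_ℝ = -(t0 * ‖cvec‖ ^ 2) := by
    have : (p - t0 • cvec) - p = -(t0 • cvec) := by abel
    rw [this, inner_neg_right, real_inner_smul_right, real_inner_self_eq_norm_sq]
  have hval : t0 * ‖cvec‖ ^ 2 = f p - finf + 1 := by
    rw [ht0]; field_simp
  have hfin := hfinf (p - t0 • cvec)
  rw [hip] at hlin
  simp only [zero_div, zero_mul, add_zero] at hlin
  linarith

end aux
set_option maxHeartbeats 1000000

/-- **Corollary (general nonconvex rate for 3PC / Ada3PC workers).**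
With `f = (1/n)∑ fi i` being `Lm`-smooth and bounded below by `finf`,
`Lp`-average-smoothness, 3PC constants `A ∈ (0,1]`, `B ≥ 0`, the stepsize
`γ = 1/(Lm + Lp√(B/A))`, iterates `x (t+1) = x t - γ(1/n)∑ g t i`, and the
contraction recursion on `G`, for every `T ≥ 1`:
`min_{0 ≤ t < T} ‖∇f(x^t)‖² ≤ 2(f(x⁰) - f^inf)(Lm + Lp√(B/A))/T + G⁰/(A·T)`. -/
theorem nonconvex_rate_3PC
    {d n : ℕ} (hn : 1 ≤ n)
    (fi : Fin n → EuclideanSpace ℝ (Fin d) → ℝ)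
    (hdiff : ∀ i, Differentiable ℝ (fi i))
    (f : EuclideanSpace ℝ (Fin d) → ℝ)
    (hf : ∀ x, f x = (1 / (n : ℝ)) * ∑ i, fi i x)
    (Lm Lp : ℝ) (hLm0 : 0 ≤ Lm) (hLp0 : 0 < Lp)
    (hLm : ∀ x y, ‖gradient f x - gradient f y‖ ≤ Lm * ‖x - y‖)
    (finf : ℝ) (hfinf : ∀ x, finf ≤ f x)
    (hLp : ∀ x y, (1 / (n : ℝ)) * ∑ i, ‖gradient (fi i) x - gradient (fi i) y‖ ^ 2
      ≤ Lp ^ 2 * ‖x - y‖ ^ 2)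
    (A B : ℝ) (hA : A ∈ Set.Ioc (0 : ℝ) 1) (hB : 0 ≤ B)
    (γ : ℝ) (hγ : γ = 1 / (Lm + Lp * Real.sqrt (B / A)))
    (x : ℕ → EuclideanSpace ℝ (Fin d))
    (g : ℕ → Fin n → EuclideanSpace ℝ (Fin d))
    (hx : ∀ t, x (t + 1) = x t - (γ / (n : ℝ)) • ∑ i, g t i)
    (G : ℕ → ℝ)
    (hG : ∀ t, G t = (1 / (n : ℝ)) * ∑ i, ‖gradient (fi i) (x t) - g t i‖ ^ 2)
    (hGrec : ∀ t, G (t + 1) ≤ (1 - A) * G t + B * Lp ^ 2 * ‖x (t + 1) - x t‖ ^ 2) :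
    ∀ T : ℕ, ∀ hT : 1 ≤ T,
      (Finset.range T).inf'
          (Finset.nonempty_range_iff.mpr (by omega))
          (fun t => ‖gradient f (x t)‖ ^ 2) ≤
        2 * (f (x 0) - finf) * (Lm + Lp * Real.sqrt (B / A)) / T
          + G 0 / (A * T) := by
  intro T hT
  have hApos : (0:ℝ) < A := hA.1
  have hnpos : (0:ℝ) < n := by exact_mod_cast hn
  have hTpos : (0:ℝ) < T := by exact_mod_cast hT
  have hGnn : ∀ t, 0 ≤ G t := by
    intro t; rw [hG t]
    have h1 : 0 ≤ ∑ i, ‖gradient (fi i) (x t) - g t i‖ ^ 2 :=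
      Finset.sum_nonneg fun i _ => by positivity
    positivity
  have hfe : f = fun z => (1 / (n : ℝ)) * ∑ i, fi i z := funext hf
  have hfd : Differentiable ℝ f := by
    rw [hfe]
    exact (Differentiable.fun_sum fun i _ => hdiff i).const_mul _
  have hs0 : 0 ≤ Lp * Real.sqrt (B / A) := mul_nonneg hLp0.le (Real.sqrt_nonneg _)
  have hsq : (Lp * Real.sqrt (B / A)) ^ 2 = Lp ^ 2 * (B / A) := by
    rw [mul_pow, Real.sq_sqrt (div_nonneg hB hApos.le)]
  have hD0 : 0 ≤ Lm + Lp * Real.sqrt (B / A) := add_nonneg hLm0 hs0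
  have hmem0 : 0 ∈ Finset.range T := Finset.mem_range.mpr (by omega)
  rcases eq_or_lt_of_le hD0 with hDeq | hDpos
  · -- degenerate case: Lm = 0, gradient identically zero
    have hLm' : Lm = 0 := by linarith
    have hz : ∀ p, gradient f p = 0 :=
      grad_zero_of_flat f hfd
        (fun a b => by have := hLm a b; rwa [hLm'] at this) finf hfinf
    refine le_trans (Finset.inf'_le _ hmem0) ?_
    rw [hz, norm_zero]
    have h1 : 2 * (f (x 0) - finf) * (Lm + Lp * Real.sqrt (B / A)) / T = 0 := by
      rw [← hDeq]; ring
    have h2 : 0 ≤ G 0 / (A * T) := div_nonneg (hGnn 0) (by positivity)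
    rw [h1]
    simpa using h2
  · -- main case
    set s := Lp * Real.sqrt (B / A) with hsdef
    set D := Lm + s with hDdef
    clear_value s D
    have hγpos : 0 < γ := by rw [hγ]; exact one_div_pos.mpr hDpos
    have hγD : γ * D = 1 := by rw [hγ]; exact one_div_mul_cancel (ne_of_gt hDpos)
    set ghat : ℕ → EuclideanSpace ℝ (Fin d) := fun t => ((n:ℝ)⁻¹) • ∑ i, g t i with hghat
    clear_value ghat
    have hx' : ∀ t, x (t + 1) = x t - γ • ghat t := by
      intro t
      simp only [hghat, hx t, smul_smul, div_eq_mul_inv]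
    -- Jensen: distance of averaged direction to full gradient
    have hJ : ∀ t, ‖gradient f (x t) - ghat t‖ ^ 2 ≤ G t := by
      intro t
      have hgradf : gradient f (x t)
          = (1 / (n : ℝ)) • ∑ i, gradient (fi i) (x t) := by
        have hsum : HasFDerivAt (fun z : EuclideanSpace ℝ (Fin d) => ∑ i, fi i z)
            (∑ i, fderiv ℝ (fi i) (x t)) (x t) :=
          HasFDerivAt.fun_sum fun i _ => (hdiff i (x t)).hasFDerivAt
        have hmul : HasFDerivAt f
            ((1 / (n : ℝ)) • ∑ i, fderiv ℝ (fi i) (x t)) (x t) := by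
          rw [hfe]; exact hsum.const_mul _
        rw [gradient, hmul.fderiv, map_smul, map_sum]
        rfl
      set S := ∑ i, (gradient (fi i) (x t) - g t i) with hS
      have h1 : gradient f (x t) - ghat t = (n:ℝ)⁻¹ • S := by
        rw [hgradf, hghat, hS, Finset.sum_sub_distrib, smul_sub, one_div]
      have h3 : ‖S‖ ^ 2 ≤ (n:ℝ) * ∑ i, ‖gradient (fi i) (x t) - g t i‖ ^ 2 := by
        calc ‖S‖ ^ 2 ≤ (∑ i, ‖gradient (fi i) (x t) - g t i‖) ^ 2 := by
              apply pow_le_pow_left₀ (norm_nonneg _) (norm_sum_le _ _)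
          _ ≤ ((Finset.univ : Finset (Fin n)).card : ℝ)
              * ∑ i, ‖gradient (fi i) (x t) - g t i‖ ^ 2 :=
              sq_sum_le_card_mul_sum_sq
          _ = (n:ℝ) * ∑ i, ‖gradient (fi i) (x t) - g t i‖ ^ 2 := by simp
      rw [h1, hG t, norm_smul, Real.norm_eq_abs, abs_of_nonneg (by positivity), mul_pow]
      calc ((n:ℝ)⁻¹) ^ 2 * ‖S‖ ^ 2
          ≤ ((n:ℝ)⁻¹) ^ 2 * ((n:ℝ) * ∑ i, ‖gradient (fi i) (x t) - g t i‖ ^ 2) :=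
            mul_le_mul_of_nonneg_left h3 (by positivity)
        _ = (1 / (n : ℝ)) * ∑ i, ‖gradient (fi i) (x t) - g t i‖ ^ 2 := by
            field_simp
    -- squared step length
    have hlen : ∀ t, ‖x (t+1) - x t‖ ^ 2 = γ^2 * ‖ghat t‖ ^ 2 := by
      intro t
      have h2 : x (t+1) - x t = -(γ • ghat t) := by rw [hx' t]; abel
      rw [h2, norm_neg, norm_smul, Real.norm_eq_abs, abs_of_nonneg hγpos.le, mul_pow]
    -- one-step descent
    have hstep1 : ∀ t, f (x (t+1)) ≤ f (x t) - γ/2 * ‖gradient f (x t)‖ ^ 2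
        - (γ/2 - Lm * γ^2 / 2) * ‖ghat t‖ ^ 2 + γ/2 * G t := by
      intro t
      have hdes := descent_lemma f hfd Lm hLm0 hLm (x t) (x (t+1))
      have h2 : x (t+1) - x t = -(γ • ghat t) := by rw [hx' t]; abel
      have h3 : ⟪gradient f (x t), x (t+1) - x t⟫_ℝ
          = -(γ * ⟪gradient f (x t), ghat t⟫_ℝ) := by
        rw [h2, inner_neg_right, real_inner_smul_right]
      have h4 : ‖gradient f (x t) - ghat t‖ ^ 2
          = ‖gradient f (x t)‖ ^ 2 - 2 * ⟪gradient f (x t), ghat t⟫_ℝ + ‖ghat t‖ ^ 2 :=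
        norm_sub_sq_real _ _
      have h6 := hJ t
      have h7 : -(2 * ⟪gradient f (x t), ghat t⟫_ℝ)
          ≤ G t - ‖gradient f (x t)‖ ^ 2 - ‖ghat t‖ ^ 2 := by linarith
      have h8 := mul_le_mul_of_nonneg_left h7 (by positivity : (0:ℝ) ≤ γ/2)
      rw [h3, hlen t] at hdes
      nlinarith [hdes, h8]
    -- coefficient inequality
    have hcoef : γ/(2*A) * (B * Lp^2) * γ^2 + Lm * γ^2 / 2 ≤ γ / 2 := by
      have hBL : B * Lp ^ 2 = A * s ^ 2 := by
        rw [hsq]; field_simp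
      have h1 : γ * s ≤ 1 := by
        nlinarith [mul_nonneg hγpos.le hLm0, hγD, hDdef]
      have h2 : γ ^ 2 * D = γ := by rw [pow_two, mul_assoc, hγD, mul_one]
      have e : γ/(2*A) * (B * Lp^2) * γ^2 = γ^3 * s^2 / 2 := by
        rw [hBL]; field_simp
      rw [e]
      nlinarith [mul_nonneg (mul_nonneg (mul_nonneg hγpos.le hγpos.le) hs0)
        (sub_nonneg.mpr h1), h2, hDdef]
    set c := γ/(2*A) with hcdef
    clear_value c
    have hc0 : 0 ≤ c := by rw [hcdef]; positivity
    have hcA : c * A = γ / 2 := by rw [hcdef]; field_simp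
    set Φ : ℕ → ℝ := fun t => f (x t) - finf + c * G t with hΦ
    clear_value Φ
    have hstep : ∀ t, Φ (t+1) + γ/2 * ‖gradient f (x t)‖ ^ 2 ≤ Φ t := by
      intro t
      have h1 := hstep1 t
      have h2 : G (t+1) ≤ (1-A) * G t + B * Lp^2 * (γ^2 * ‖ghat t‖^2) := by
        have h := hGrec t; rwa [hlen t] at h
      have h3 : c * G (t+1) ≤ c * ((1-A) * G t) + c * (B*Lp^2) * (γ^2 * ‖ghat t‖^2) := by
        calc c * G (t+1) ≤ c * ((1-A) * G t + B * Lp^2 * (γ^2 * ‖ghat t‖^2)) :=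
              mul_le_mul_of_nonneg_left h2 hc0
          _ = _ := by ring
      have h4 : c * ((1-A) * G t) = c * G t - (γ/2) * G t := by
        linear_combination (-(G t)) * hcA
      have h6 : c * (B*Lp^2) * (γ^2 * ‖ghat t‖^2) + Lm * γ^2/2 * ‖ghat t‖^2
          ≤ γ/2 * ‖ghat t‖^2 := by
        have h := mul_le_mul_of_nonneg_right hcoef (sq_nonneg ‖ghat t‖)
        nlinarith [h]
      simp only [hΦ]
      linarith [h1, h3, h4, h6]
    have hsumle : ∀ N : ℕ, Φ N + (γ/2) * ∑ t ∈ Finset.range N, ‖gradient f (x t)‖ ^ 2 ≤ Φ 0 := by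
      intro N
      induction N with
      | zero => simp
      | succ N ih =>
        rw [Finset.sum_range_succ]
        have h := hstep N
        linarith
    have hΦT : 0 ≤ Φ T := by
      have h1 := hfinf (x T)
      have h2 := hGnn T
      simp only [hΦ]
      nlinarith [mul_nonneg hc0 h2]
    have hsub : ∀ H, (Finset.range T).inf' H (fun t => ‖gradient f (x t)‖ ^ 2)
        ≤ 2 * (f (x 0) - finf) * D / ↑T + G 0 / (A * ↑T) := by
      intro H
      set m := (Finset.range T).inf' H (fun t => ‖gradient f (x t)‖ ^ 2) with hm
      have hTm : (T:ℝ) * m ≤ ∑ t ∈ Finset.range T, ‖gradient f (x t)‖ ^ 2 := by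
        calc (T:ℝ) * m = ∑ _t ∈ Finset.range T, m := by
              rw [Finset.sum_const, Finset.card_range, nsmul_eq_mul]
          _ ≤ _ := Finset.sum_le_sum fun t ht => Finset.inf'_le _ ht
      clear_value m
      have hγT : 0 < (γ/2) * (T:ℝ) := by positivity
      have hfin : m * ((γ/2) * T) ≤ f (x 0) - finf + c * G 0 := by
        have h1 := hsumle T
        have h2 := mul_le_mul_of_nonneg_left hTm (by positivity : (0:ℝ) ≤ γ/2)
        have h3 : Φ 0 = f (x 0) - finf + c * G 0 := by simp only [hΦ]
        rw [h3] at h1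
        linarith [h1, h2, hΦT]
      have hdiv := (le_div_iff₀ hγT).mpr hfin
      refine hdiv.trans (le_of_eq ?_)
      rw [hcdef, hγ]
      have hDne : D ≠ 0 := ne_of_gt hDpos
      field_simp
    exact hsub _
end
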